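/- arXiv:0808.4119 — 2 statements merged into one kernel-verified Lean document; each statement's English description precedes it below -/
import Mathlib

section
/- Suppose {X_α, φ_{βα}} is a strong Mittag-Leffler inverse system of uniform spaces and f_α : X_α → Y are compatible maps into a fixed uniform space Y (i.e., f_α ∘ φ_{βα} = f_β for β ≥ α), each of which has chain lifting. Then the induced map f = lim f_α : lim X_α → Y has chain lifting. -/
/-! Given an entourage of the limit, shrink it to the pullback of an entourage `U` of some `X_i`
and choose `j ≥ i` with `φ_{ji}(X_j) = π_i(lim X)`. A chain in `Y` is lifted by `f_j` to a
`φ_{ji}⁻¹ U`-chain in `X_j` starting at `x_j`; pushed down by `φ_{ji}` it becomes a `U`-chain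
in the image of the limit, so it can be lifted pointwise along `π_i` starting at `x`. -/

open Filter Set

universe u v

section Chains

variable {X : Type u} {Y : Type v}

/-- `c` is an `E`-chain: consecutive members of the list lie in `E`. -/
def IsEChain (E : Set (X × X)) (c : List X) : Prop :=
  c.Chain' (fun a b => (a, b) ∈ E)

/-- Two chains (necessarily of the same length) are `E`-close. -/
def EClose (E : Set (X × X)) (c d : List X) : Prop :=
  List.Forall₂ (fun a b => (a, b) ∈ E) c d

variable [UniformSpace X] [UniformSpace Y]

/-- `f` generates the uniform structure on `Y`: it is uniformly continuous,
surjective, and images of entourages are entourages. -/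
def GeneratesUS (f : X → Y) : Prop :=
  UniformContinuous f ∧ Function.Surjective f ∧
    ∀ E ∈ uniformity X, Prod.map f f '' E ∈ uniformity Y

/-- `f` has chain lifting. -/
def ChainLifting (f : X → Y) : Prop :=
  ∀ E ∈ uniformity X, ∃ F ∈ uniformity X, ∀ x : X, ∀ c : List Y,
    IsEChain (Prod.map f f '' F) c → c.head? = some (f x) →
      ∃ d : List X, IsEChain E d ∧ d.head? = some x ∧ d.map f = c

/-- `f` has uniqueness of chain lifts. -/
def UniqueChainLifts (f : X → Y) : Prop :=
  ∀ E ∈ uniformity X, ∃ F ∈ uniformity X, F ⊆ E ∧ ∀ c d : List X,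
    IsEChain F c → IsEChain F d → c.head? = d.head? → c.map f = d.map f → c = d

/-- `f` has approximate uniqueness of chain lifts. -/
def ApproxUniqueChainLifts (f : X → Y) : Prop :=
  ∀ E ∈ uniformity X, ∃ F ∈ uniformity X, F ⊆ E ∧ ∀ c d : List X,
    IsEChain F c → IsEChain F d → c.head? = d.head? → c.map f = d.map f → EClose E c d

/-- `f` has strong approximate uniqueness of chain lifts. -/
def StrongApproxUniqueChainLifts (f : X → Y) : Prop :=
  ∀ E ∈ uniformity X, ∃ F ∈ uniformity X, F ⊆ E ∧ ∀ c d : List X,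
    IsEChain F c → IsEChain F d → c.head? = d.head? → c.map f = d.map f → EClose F c d

/-- `f` is a uniform covering map. -/
def IsUCM (f : X → Y) : Prop :=
  GeneratesUS f ∧ ChainLifting f ∧ UniqueChainLifts f

/-- `h` has `F`-bounded fibers. -/
def BoundedFibers {Z : Type*} (F : Set (X × X)) (h : X → Z) : Prop :=
  ∀ a b : X, h a = h b → (a, b) ∈ F

/-- `f` has complete fibers (each fiber, with the subspace uniformity, is complete). -/
def CompleteFibers (f : X → Y) : Prop :=
  ∀ y : Y, IsComplete (f ⁻¹' {y})

/-- `f` is approximated by uniform covering maps. -/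
def ApproxByUCMs (f : X → Y) : Prop :=
  ∀ E ∈ uniformity X, ∃ F ∈ uniformity X, F ⊆ E ∧
    ∃ (Z : Type (max u v)) (_ : UniformSpace Z) (h : X → Z) (g : Z → Y),
      (∀ x, g (h x) = f x) ∧ IsUCM g ∧ BoundedFibers F h

end Chains

/-- An inverse system of uniform spaces over a preordered index set, with
uniformly continuous bonding maps `bond i j h : Xs j → Xs i` for `i ≤ j`. -/
structure InvSys (ι : Type*) [Preorder ι] (Xs : ι → Type*)
    [∀ i, UniformSpace (Xs i)] where
  bond : ∀ i j, i ≤ j → Xs j → Xs i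
  uc : ∀ i j (h : i ≤ j), UniformContinuous (bond i j h)
  bond_self : ∀ i (x : Xs i), bond i i le_rfl x = x
  bond_comp : ∀ i j k (hij : i ≤ j) (hjk : j ≤ k) (x : Xs k),
    bond i j hij (bond j k hjk x) = bond i k (hij.trans hjk) x

/-- The inverse limit (the set of threads), carrying the inverse limit uniformity:
the subspace uniformity of the product uniformity, whose basic entourages are
preimages of entourages under the projections (since the index set is directed). -/
abbrev InvLim {ι : Type*} [Preorder ι] {Xs : ι → Type*} [∀ i, UniformSpace (Xs i)]
    (S : InvSys ι Xs) : Type _ :=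
  { x : ∀ i, Xs i // ∀ i j (h : i ≤ j), S.bond i j h (x j) = x i }

/-- The strong Mittag-Leffler property of an inverse system. -/
def StrongML {ι : Type*} [Preorder ι] {Xs : ι → Type*} [∀ i, UniformSpace (Xs i)]
    (S : InvSys ι Xs) : Prop :=
  ∀ i : ι, ∃ j : ι, ∃ h : i ≤ j,
    Set.range (S.bond i j h) = Set.range (fun x : InvLim S => x.1 i)

open scoped Uniformity

section Chains

variable {X Z : Type*}

theorem IsEChain.mono {E F : Set (X × X)} {c : List X} (hEF : E ⊆ F) (hc : IsEChain E c) :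
    IsEChain F c :=
  hc.imp fun _ _ hab => hEF hab

theorem isEChain_map_iff {g : Z → X} {E : Set (X × X)} {c : List Z} :
    IsEChain E (c.map g) ↔ IsEChain (Prod.map g g ⁻¹' E) c :=
  List.isChain_map g

theorem List.exists_map_eq_of_head?_eq {p : Z → X} {z : Z} {l : List X}
    (hhead : l.head? = some (p z)) (hrange : ∀ a ∈ l, a ∈ Set.range p) :
    ∃ d : List Z, d.head? = some z ∧ d.map p = l := by
  obtain ⟨a, t, rfl⟩ := List.exists_cons_of_ne_nil (l := l) (by rintro rfl; simp at hhead)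
  obtain rfl : a = p z := by simpa using hhead
  obtain ⟨d, rfl⟩ : t ∈ Set.range (List.map p) := by
    rw [Set.range_list_map]
    exact fun b hb => hrange b (List.mem_cons_of_mem _ hb)
  exact ⟨z :: d, rfl, rfl⟩

theorem image_prodMap_preimage_subset {L A : Type*} {q : L → A} {g : A → X} {f : L → X}
    (hf : ∀ x, f x = g (q x)) (F : Set (A × A)) :
    Prod.map f f '' (Prod.map q q ⁻¹' F) ⊆ Prod.map g g '' F := by
  rintro _ ⟨⟨a, b⟩, hab, rfl⟩
  exact ⟨(q a, q b), hab, by simp [hf]⟩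

end Chains

namespace InvSys

variable {ι : Type*} [Preorder ι] {Xs : ι → Type*} [∀ i, UniformSpace (Xs i)]
  (S : InvSys ι Xs)

abbrev proj (i : ι) (x : InvLim S) : Xs i := x.1 i

theorem uniformity_invLim :
    𝓤 (InvLim S) = ⨅ i, comap (Prod.map (S.proj i) (S.proj i)) (𝓤 (Xs i)) := by
  rw [uniformity_subtype, Pi.uniformity]
  simp only [comap_iInf, comap_comap]
  rfl

theorem proj_bond {i j : ι} (hij : i ≤ j) : S.bond i j hij ∘ S.proj j = S.proj i :=
  funext fun x => x.2 i j hij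

theorem antitone_comap_uniformity_proj :
    Antitone fun i => comap (Prod.map (S.proj i) (S.proj i)) (𝓤 (Xs i)) := by
  intro i j hij
  dsimp only
  rw [← S.proj_bond hij, ← Prod.map_comp_map, ← comap_comap]
  exact comap_mono (S.uc i j hij).le_comap

theorem preimage_proj_mem_uniformity {i : ι} {U : Set (Xs i × Xs i)} (hU : U ∈ 𝓤 (Xs i)) :
    Prod.map (S.proj i) (S.proj i) ⁻¹' U ∈ 𝓤 (InvLim S) := by
  rw [uniformity_invLim]
  exact mem_iInf_of_mem i (preimage_mem_comap hU)

theorem exists_preimage_proj_subset [IsDirected ι (· ≤ ·)] [Nonempty ι]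
    {E : Set (InvLim S × InvLim S)} (hE : E ∈ 𝓤 (InvLim S)) :
    ∃ i, ∃ U ∈ 𝓤 (Xs i), Prod.map (S.proj i) (S.proj i) ⁻¹' U ⊆ E := by
  rw [uniformity_invLim, mem_iInf_of_directed S.antitone_comap_uniformity_proj.directed_ge] at hE
  obtain ⟨i, hi⟩ := hE
  exact ⟨i, mem_comap.mp hi⟩

end InvSys

/-- If each compatible map `f_α : X_α → Y` of a strong Mittag-Leffler inverse
system has chain lifting, then the induced map from the inverse limit has chain
lifting. -/
theorem invLim_chainLifting
    {ι : Type*} [Preorder ι] [IsDirected ι (· ≤ ·)] [Nonempty ι]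
    {Xs : ι → Type*} [∀ i, UniformSpace (Xs i)]
    {Y : Type*} [UniformSpace Y]
    (S : InvSys ι Xs) (hml : StrongML S)
    (fι : ∀ i, Xs i → Y)
    (hcompat : ∀ i j (h : i ≤ j) (x : Xs j), fι i (S.bond i j h x) = fι j x)
    (hcl : ∀ i, ChainLifting (fι i))
    (f : InvLim S → Y)
    (hf : ∀ (i : ι) (x : InvLim S), f x = fι i (x.1 i)) :
    ChainLifting f := by
  intro E hE
  obtain ⟨i, U, hU, hUE⟩ := S.exists_preimage_proj_subset hE
  obtain ⟨j, hij, hrange⟩ := hml i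
  obtain ⟨V, hV, hlift⟩ :=
    hcl j (Prod.map (S.bond i j hij) (S.bond i j hij) ⁻¹' U) (S.uc i j hij hU)
  refine ⟨_, S.preimage_proj_mem_uniformity hV, fun x c hc hhead => ?_⟩
  obtain ⟨e, he, hehead, rfl⟩ := hlift (x.1 j) c
    (hc.mono (image_prodMap_preimage_subset (hf j) V)) (by rw [hhead, hf j])
  -- strong Mittag-Leffler: the pushed-down chain stays inside the image of the limit
  obtain ⟨d, hdhead, hdmap⟩ := List.exists_map_eq_of_head?_eq (p := S.proj i) (z := x)
    (l := e.map (S.bond i j hij)) (by simp [hehead, x.2 i j hij])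
    (by simp [← hrange])
  refine ⟨d, ?_, hdhead, ?_⟩
  · rw [← isEChain_map_iff, ← hdmap, isEChain_map_iff] at he
    exact he.mono hUE
  · calc d.map f = (d.map (S.proj i)).map (fι i) := by simp [hf i]
      _ = e.map (fι j) := by simp [hdmap, hcompat]
end

section
/- Suppose f : X → Y is a map between uniform spaces that generates the uniform structure on Y, has chain lifting, and has strong approximate uniqueness of chain lifts, and suppose X is Hausdorff. Let B be a basis of entourages of X such that for each F ∈ B any two F-chains in X starting at the same point with identical images under f are F-close (such a basis exists by strong approximate uniqueness). For F ⊆ E in B, the map φ_{FE} : X_f/F → X_f/E sending q_F(x) to q_E(x) is well defined, giving an inverse system {X_f/E, φ_{FE}} indexed by B (ordered by reverse inclusion), where each X_f/E carries the uniform structure generated by q_E. Then the induced map q : X → lim_{E∈B} X_f/E, x ↦ (q_E(x))_{E∈B}, is a uniform embedding; if moreover f has complete fibers, then q is a uniform equivalence. -/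
open Filter Set

universe u v

section XfEQuot

variable {X : Type u} {Y : Type v}

/-- `y` can be joined to `x` by an `E`-chain inside the fiber `f⁻¹(f x)`. -/
def fiberRel (f : X → Y) (E : Set (X × X)) (x y : X) : Prop :=
  ∃ c : List X, IsEChain E c ∧ c.head? = some x ∧ c.getLast? = some y ∧
    ∀ z ∈ c, f z = f x

theorem fiberRel_mono (f : X → Y) {F E : Set (X × X)} (h : F ⊆ E) {a b : X}
    (hab : fiberRel f F a b) : fiberRel f E a b := by
  obtain ⟨c, hc, h1, h2, h3⟩ := hab
  exact ⟨c, hc.imp (fun _ _ hx => h hx), h1, h2, h3⟩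

/-- `X_f/E`: the quotient of `X` obtained by identifying each `E`-component of
each fiber of `f` to a point. -/
def XfE (f : X → Y) (E : Set (X × X)) : Type u :=
  Quot (fiberRel f E)

/-- The quotient map `q_E : X → X_f/E`. -/
def qE (f : X → Y) (E : Set (X × X)) : X → XfE f E :=
  Quot.mk (fiberRel f E)

/-- The induced map `φ_{FE} : X_f/F → X_f/E` for `F ⊆ E`, sending `q_F x` to `q_E x`. -/
def phiFE (f : X → Y) {F E : Set (X × X)} (h : F ⊆ E) : XfE f F → XfE f E :=
  Quot.lift (qE f E) (fun _ _ hab => Quot.sound (fiberRel_mono f h hab))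

end XfEQuot

/-- The inverse limit of the quotients `X_f/E`, over a family `B` of entourages
of `X` ordered by reverse inclusion, with the induced bonding maps `φ_{FE}`. -/
abbrev XfELim {X : Type u} {Y : Type v} (f : X → Y) (B : Set (Set (X × X)))
    [∀ E : Set (X × X), UniformSpace (XfE f E)] : Type _ :=
  { t : ∀ i : B, XfE f i.1 //
    ∀ (i j : B) (hij : i.1 ⊆ j.1), phiFE f hij (t i) = t j }

/-- The natural map `q : X → lim_{E ∈ B} X_f/E`, `x ↦ (q_E x)_E`. -/
def qLim {X : Type u} {Y : Type v} (f : X → Y) (B : Set (Set (X × X)))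
    [∀ E : Set (X × X), UniformSpace (XfE f E)] : X → XfELim f B :=
  fun x => ⟨fun i => qE f i.1 x, fun _ _ _ => rfl⟩

/-! For `F ∈ B`, an `F`-chain inside a fibre has the same image under `f` as the constant chain at
its head, so the two are `F`-close. Hence `q_F x = q_F x'` just says that `x` and `x'` are one
`F`-step apart inside a fibre, and the preimage under `q_F × q_F` of the entourage `q_F(F)` lies in
`F ○ F ○ F`, so the coordinates of `q` recover the uniformity of `X`. Conversely, chosen
representatives of the coordinates of a thread form a Cauchy net inside one fibre, and when the
fibres are complete its limit is a preimage of the thread. -/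

open Uniformity Topology

section FiberRel

variable {X : Type u} {Y : Type v} {f : X → Y} {F : Set (X × X)} {a b c : X}

def ChainLiftsClose (f : X → Y) (F : Set (X × X)) : Prop :=
  ∀ c d : List X, IsEChain F c → IsEChain F d → c.head? = d.head? → c.map f = d.map f →
    EClose F c d

theorem fiberRel.apply_eq (h : fiberRel f F a b) : f a = f b := by
  obtain ⟨c, -, -, hlast, hfib⟩ := h
  exact (hfib b (List.mem_of_getLast? hlast)).symm

theorem fiberRel_of_mem_of_mem (hab : (a, b) ∈ F) (hbc : (b, c) ∈ F) (hfab : f a = f b)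
    (hfbc : f b = f c) : fiberRel f F a c :=
  ⟨[a, b, c], .cons_cons hab (.cons_cons hbc (.singleton _)), rfl, rfl, by
    simp [hfab, hfbc]⟩

theorem ChainLiftsClose.mem_of_fiberRel (hcl : ChainLiftsClose f F) (hF : ∀ x, (x, x) ∈ F)
    (h : fiberRel f F a b) : (a, b) ∈ F ∧ (b, a) ∈ F := by
  obtain ⟨c, hc, hhead, hlast, hfib⟩ := h
  let d := c.map fun _ => a
  have hd : IsEChain F d :=
    (List.isChain_map _).2 (List.Pairwise.isChain (List.pairwise_of_forall fun _ _ => hF a))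
  have hhead' : c.head? = d.head? := by rw [List.head?_map, hhead]; rfl
  have hmap : c.map f = d.map f := by
    rw [List.map_map]
    exact List.map_congr_left hfib
  have hb : b ∈ c := List.mem_of_getLast? hlast
  have hdc := List.forall₂_map_left_iff.1 (hcl d c hd hc hhead'.symm hmap.symm)
  have hcd := List.forall₂_map_right_iff.1 (hcl c d hc hd hhead' hmap)
  exact ⟨List.forall₂_same.1 hdc b hb, List.forall₂_same.1 hcd b hb⟩

theorem ChainLiftsClose.fiberRel_equivalence (hcl : ChainLiftsClose f F) (hF : ∀ x, (x, x) ∈ F) :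
    Equivalence (fiberRel f F) where
  refl x := ⟨[x], .singleton x, rfl, rfl, by simp⟩
  symm h := fiberRel_of_mem_of_mem (hcl.mem_of_fiberRel hF h).2 (hF _) h.apply_eq.symm rfl
  trans h h' := fiberRel_of_mem_of_mem (hcl.mem_of_fiberRel hF h).1
    (hcl.mem_of_fiberRel hF h').1 h.apply_eq h'.apply_eq

theorem ChainLiftsClose.qE_eq_iff (hcl : ChainLiftsClose f F) (hF : ∀ x, (x, x) ∈ F) :
    qE f F a = qE f F b ↔ fiberRel f F a b :=
  ⟨fun h => (hcl.fiberRel_equivalence hF).eqvGen_iff.1 (Quot.eqvGen_exact h), Quot.sound⟩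

theorem ChainLiftsClose.preimage_image_qE_subset (hcl : ChainLiftsClose f F)
    (hF : ∀ x, (x, x) ∈ F) :
    Prod.map (qE f F) (qE f F) ⁻¹' (Prod.map (qE f F) (qE f F) '' F) ⊆
      SetRel.comp F (SetRel.comp F F) := by
  rintro ⟨x, y⟩ ⟨⟨a, b⟩, hab, heq⟩
  obtain ⟨hax, hby⟩ := Prod.mk.inj heq
  exact ⟨a, (hcl.mem_of_fiberRel hF ((hcl.qE_eq_iff hF).1 hax)).2, b, hab,
    (hcl.mem_of_fiberRel hF ((hcl.qE_eq_iff hF).1 hby)).1⟩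

end FiberRel

section Basis

variable {α : Type*} {l : Filter α} {B : Set (Set α)}

theorem Filter.HasBasis.isCodirectedOrder (hB : l.HasBasis (· ∈ B) id) : IsCodirectedOrder B :=
  ⟨fun i j =>
    let ⟨k, hk, hkij⟩ := hB.mem_iff.1 (inter_mem (hB.mem_of_mem i.2) (hB.mem_of_mem j.2))
    ⟨⟨k, hk⟩, hkij.trans inter_subset_left, hkij.trans inter_subset_right⟩⟩

theorem Filter.HasBasis.nonempty_subtype (hB : l.HasBasis (· ∈ B) id) : Nonempty B :=
  let ⟨i, hi, _⟩ := hB.mem_iff.1 univ_mem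
  ⟨⟨i, hi⟩⟩

end Basis

section Uniform

variable {α : Type*} [UniformSpace α] {B : Set (Set (α × α))}

theorem uniformity_eq_map_of_hasBasis {β : Type*} [UniformSpace β] {g : α → β}
    (h : (𝓤 β).HasBasis (· ∈ 𝓤 α) (Prod.map g g '' ·)) : 𝓤 β = map (Prod.map g g) (𝓤 α) :=
  h.eq_of_same_basis ((𝓤 α).basis_sets.map _)

theorem cauchy_map_atBot_of_hasBasis (hB : (𝓤 α).HasBasis (· ∈ B) id) {x : B → α}
    (hx : ∀ i j : B, i ≤ j → (x i, x j) ∈ j.1 ∧ (x j, x i) ∈ j.1) : Cauchy (map x atBot) := by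
  have := hB.isCodirectedOrder
  have := hB.nonempty_subtype
  refine cauchy_map_iff.2 ⟨atBot_neBot, fun S hS => ?_⟩
  obtain ⟨V, hV, hVS⟩ := comp_mem_uniformity_sets hS
  obtain ⟨G, hGB, hGV⟩ := hB.mem_iff.1 hV
  rw [prod_atBot_atBot_eq, mem_map]
  filter_upwards [eventually_le_atBot ((⟨G, hGB⟩, ⟨G, hGB⟩) : B × B)] with p hp
  exact hVS ⟨x ⟨G, hGB⟩, hGV (hx _ _ hp.1).1, hGV (hx _ _ hp.2).2⟩

theorem exists_le_mem_of_tendsto_atBot (hB : (𝓤 α).HasBasis (· ∈ B) id) {x : B → α} {z : α}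
    (hxz : Tendsto x atBot (𝓝 z)) (i : B) : ∃ k ≤ i, (z, x k) ∈ i.1 := by
  have := hB.isCodirectedOrder
  have := hB.nonempty_subtype
  exact ((eventually_le_atBot i).and (hxz (mem_nhds_left z (hB.mem_of_mem i.2)))).exists

end Uniform

section InverseLimit

variable {X : Type u} {Y : Type v} [UniformSpace X] {f : X → Y} {B : Set (Set (X × X))}
  [∀ E : Set (X × X), UniformSpace (XfE f E)]

theorem uniformContinuous_qLim
    (hq : ∀ E ∈ B, 𝓤 (XfE f E) = map (Prod.map (qE f E) (qE f E)) (𝓤 X)) :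
    UniformContinuous (qLim f B) :=
  (uniformContinuous_pi.2 fun i => by
    rw [UniformContinuous, hq i.1 i.2]
    exact tendsto_map).subtype_mk _

theorem isUniformInducing_qLim (hB : (𝓤 X).HasBasis (· ∈ B) id)
    (hBchain : ∀ F ∈ B, ChainLiftsClose f F)
    (hq : ∀ E ∈ B, 𝓤 (XfE f E) = map (Prod.map (qE f E) (qE f E)) (𝓤 X)) :
    IsUniformInducing (qLim f B) := by
  refine ⟨le_antisymm (fun S hS => ?_) (uniformContinuous_qLim hq).le_comap⟩
  obtain ⟨V, hV, hVS⟩ := comp3_mem_uniformity hS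
  obtain ⟨F, hFB, hFV⟩ := hB.mem_iff.1 hV
  have hF : F ∈ 𝓤 X := hB.mem_of_mem hFB
  have hproj : UniformContinuous fun t : XfELim f B => t.1 ⟨F, hFB⟩ :=
    (Pi.uniformContinuous_proj _ _).comp uniformContinuous_subtype_val
  have himage : Prod.map (qE f F) (qE f F) '' F ∈ 𝓤 (XfE f F) := by
    rw [hq F hFB]
    exact image_mem_map hF
  refine mem_comap.2 ⟨_, hproj himage, fun p hp => hVS ?_⟩
  exact SetRel.comp_subset_comp hFV (SetRel.comp_subset_comp hFV hFV)
    ((hBchain F hFB).preimage_image_qE_subset (fun _ => refl_mem_uniformity hF) hp)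

theorem surjective_qLim (hB : (𝓤 X).HasBasis (· ∈ B) id)
    (hBchain : ∀ F ∈ B, ChainLiftsClose f F) (hcf : CompleteFibers f) :
    Function.Surjective (qLim f B) := by
  intro t
  have := hB.isCodirectedOrder
  obtain ⟨i₀⟩ := hB.nonempty_subtype
  have hrefl : ∀ (i : B) x, (x, x) ∈ i.1 := fun i _ => refl_mem_uniformity (hB.mem_of_mem i.2)
  have hrep : ∀ i : B, ∃ a, qE f i.1 a = t.1 i := fun i => Quot.exists_rep _
  choose x hx using hrep
  have hrel : ∀ i j : B, i ≤ j → fiberRel f j.1 (x i) (x j) := fun i j hij =>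
    ((hBchain j.1 j.2).qE_eq_iff (hrefl j)).1 (by
      rw [hx j, ← t.2 i j hij, ← hx i]
      rfl)
  have hfx : ∀ i, f (x i) = f (x i₀) := fun i =>
    let ⟨k, hki, hki₀⟩ := directed_of (· ≥ ·) i i₀
    (hrel k i hki).apply_eq.symm.trans (hrel k i₀ hki₀).apply_eq
  have hcauchy : Cauchy (map x atBot) := cauchy_map_atBot_of_hasBasis hB fun i j hij =>
    ((hBchain j.1 j.2).mem_of_fiberRel (hrefl j) (hrel i j hij))
  have hfiber : map x atBot ≤ 𝓟 (f ⁻¹' {f (x i₀)}) :=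
    le_principal_iff.2 (mem_map.2 (univ_mem' hfx))
  obtain ⟨z, hz, hxz⟩ := hcf (f (x i₀)) _ hcauchy hfiber
  refine ⟨z, Subtype.ext (funext fun i => ?_)⟩
  obtain ⟨k, hki, hzk⟩ := exists_le_mem_of_tendsto_atBot hB hxz i
  change qE f i.1 z = t.1 i
  rw [← hx i]
  exact Quot.sound (fiberRel_of_mem_of_mem hzk
    ((hBchain i.1 i.2).mem_of_fiberRel (hrefl i) (hrel k i hki)).1
    (hz.trans (hfx k).symm) (hrel k i hki).apply_eq)

end InverseLimit

/-- Suppose `f : X → Y` generates the uniform structure on `Y`, has chain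
lifting and strong approximate uniqueness of chain lifts, `X` is Hausdorff, and
`B` is a basis of entourages of `X` such that for each `F ∈ B` any two
`F`-chains starting at the same point with identical images under `f` are
`F`-close; suppose each `X_f/E` (for `E ∈ B`) carries the uniform structure
generated by `q_E`. Then `q : X → lim_{E ∈ B} X_f/E` is a uniform embedding,
and if moreover `f` has complete fibers, `q` is a uniform equivalence. -/
theorem qLim_isUniformEmbedding
    {X : Type u} {Y : Type v} [UniformSpace X] [UniformSpace Y] [T2Space X]
    (f : X → Y) (hgen : GeneratesUS f) (hcl : ChainLifting f)
    (hsau : StrongApproxUniqueChainLifts f)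
    (B : Set (Set (X × X)))
    (hBent : ∀ E ∈ B, E ∈ uniformity X)
    (hBbasis : ∀ S ∈ uniformity X, ∃ E ∈ B, E ⊆ S)
    (hBchain : ∀ F ∈ B, ∀ c d : List X, IsEChain F c → IsEChain F d →
      c.head? = d.head? → c.map f = d.map f → EClose F c d)
    [∀ E : Set (X × X), UniformSpace (XfE f E)]
    (huq : ∀ E ∈ B, (uniformity (XfE f E)).HasBasis
      (fun D : Set (X × X) => D ∈ uniformity X)
      (fun D => Prod.map (qE f E) (qE f E) '' D)) :
    IsUniformEmbedding (qLim f B) ∧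
      (CompleteFibers f → ∃ e : X ≃ᵤ XfELim f B, ⇑e = qLim f B) := by
  have hB : (𝓤 X).HasBasis (· ∈ B) id :=
    ⟨fun S => ⟨hBbasis S, fun ⟨E, hE, hES⟩ => mem_of_superset (hBent E hE) hES⟩⟩
  have hind : IsUniformInducing (qLim f B) :=
    isUniformInducing_qLim hB hBchain fun E hE => uniformity_eq_map_of_hasBasis (huq E hE)
  refine ⟨hind.isUniformEmbedding, fun hcf => ?_⟩
  let e := Equiv.ofBijective _ ⟨hind.isUniformEmbedding.injective, surjective_qLim hB hBchain hcf⟩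
  exact ⟨e.toUniformEquivOfIsUniformInducing hind, rfl⟩
end
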